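/- arXiv:2512.06244 — 3 statements merged into one kernel-verified Lean document; each statement's English description precedes it below -/
import Mathlib

section
/- The negative Tsallis entropy ω(u) := -(1/((1-p)p)) ∑_{a} u(a)^p with entropic index p ∈ (0,1) is strongly convex with modulus 1 with respect to the ℓ1-norm on the relative interior of the probability simplex; equivalently, for all u in the relative interior of the simplex and all x ∈ ℝ^n, x^T ∇²ω(u) x ≥ ‖x‖₁². -/
/-! Cauchy–Schwarz with the weights `u i ^ (2 - p)` and `x i ^ 2 * u i ^ (p - 2)`, whose product is
`|x i| ^ 2`, bounds `(∑ |x i|) ^ 2` by `∑ u i ^ (2 - p)` times the Hessian form; since `2 - p ≥ 1`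
and `u` lies in the simplex, `∑ u i ^ (2 - p) ≤ ∑ u i = 1`. -/

open Finset

lemma Finset.sum_rpow_le_one_of_sum_le_one {ι : Type*} (s : Finset ι) {u : ι → ℝ} {q : ℝ}
    (hu : ∀ i ∈ s, 0 ≤ u i) (hsum : ∑ i ∈ s, u i ≤ 1) (hq : 1 ≤ q) :
    ∑ i ∈ s, u i ^ q ≤ 1 :=
  calc ∑ i ∈ s, u i ^ q ≤ ∑ i ∈ s, u i := sum_le_sum fun i hi =>
        Real.rpow_le_self_of_le_one (hu i hi) ((single_le_sum hu hi).trans hsum) hq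
    _ ≤ 1 := hsum

theorem tsallis_hessian_strong_convexity_general
    (n : ℕ) (p : ℝ) (hp1 : p < 1)
    (u : Fin n → ℝ) (hu_pos : ∀ i, 0 < u i) (hu_sum : ∑ i, u i = 1)
    (x : Fin n → ℝ) :
    (∑ i, |x i|) ^ 2 ≤ ∑ i, (x i) ^ 2 * u i ^ (p - 2) := by
  have hsplit : ∀ i, |x i| ^ 2 = u i ^ (2 - p) * (x i ^ 2 * u i ^ (p - 2)) := fun i => by
    rw [mul_left_comm, ← Real.rpow_add (hu_pos i), sub_add_sub_cancel', sub_self,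
      Real.rpow_zero, mul_one, sq_abs]
  have hweights : ∑ i, u i ^ (2 - p) ≤ 1 :=
    sum_rpow_le_one_of_sum_le_one _ (fun i _ => (hu_pos i).le) hu_sum.le (by linarith)
  have hterm : ∀ i ∈ univ, 0 ≤ x i ^ 2 * u i ^ (p - 2) := fun i _ =>
    mul_nonneg (sq_nonneg _) (Real.rpow_nonneg (hu_pos i).le _)
  calc (∑ i, |x i|) ^ 2 ≤ (∑ i, u i ^ (2 - p)) * ∑ i, x i ^ 2 * u i ^ (p - 2) :=
        sum_sq_le_sum_mul_sum_of_sq_le_mul _ (fun i _ => (Real.rpow_pos_of_pos (hu_pos i) _).le)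
          hterm (fun i _ => (hsplit i).le)
    _ ≤ ∑ i, x i ^ 2 * u i ^ (p - 2) := mul_le_of_le_one_left (sum_nonneg hterm) hweights

/-- Strong convexity (modulus 1 w.r.t. ℓ1) of negative Tsallis entropy on the
relative interior of the simplex: the Hessian quadratic form dominates ‖x‖₁². -/
theorem tsallis_hessian_strong_convexity
    (n : ℕ) (hn : 1 ≤ n) (p : ℝ) (hp0 : 0 < p) (hp1 : p < 1)
    (u : Fin n → ℝ) (hu_pos : ∀ i, 0 < u i) (hu_sum : ∑ i, u i = 1)
    (x : Fin n → ℝ) :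
    (∑ i, |x i|) ^ 2 ≤ ∑ i, (x i) ^ 2 * u i ^ (p - 2) :=
  tsallis_hessian_strong_convexity_general n p hp1 u hu_pos hu_sum x
end

section
/- If a nonnegative integer-valued random variable τ satisfies Pr{τ = i} ≤ (1 - λ/2)^{⌈i/t⌉ - 1} for all i ≥ 0, where λ ∈ (0,1] and t ≥ 1 is an integer, then for b := λ / (2t·log(4t/(λδ))) with δ ∈ (0,1), we have Pr{τ ≥ b^{-1}} ≤ (4t/λ)(1 - λ/(2t))^{⌈b^{-1}⌉} ≤ δ. -/
open scoped NNReal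

set_option maxHeartbeats 1000000 in
/-- Hitting-time tail bound: if Pr{τ = i} ≤ (1 - λ/2)^(⌈i/t⌉-1), then with
b := λ/(2t·log(4t/(λδ))), Pr{τ ≥ b⁻¹} ≤ (4t/λ)(1 - λ/(2t))^⌈b⁻¹⌉ ≤ δ. -/
theorem hitting_time_tail_bound
    (l : ℝ) (hl0 : 0 < l) (hl1 : l ≤ 1)
    (t : ℕ) (ht : 1 ≤ t) (δ : ℝ) (hδ0 : 0 < δ) (hδ1 : δ < 1)
    (p : PMF ℕ)
    (hp : ∀ i : ℕ, (p i).toReal ≤ (1 - l / 2) ^ (⌈(i : ℝ) / t⌉ - 1))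
    (b : ℝ) (hb : b = l / (2 * t * Real.log (4 * t / (l * δ)))) :
    (p.toMeasure {i : ℕ | b⁻¹ ≤ (i : ℝ)}).toReal ≤
        (4 * t / l) * (1 - l / (2 * t)) ^ ⌈b⁻¹⌉₊ ∧
    (4 * t / l) * (1 - l / (2 * t)) ^ ⌈b⁻¹⌉₊ ≤ δ := by
  have ht1 : (1:ℝ) ≤ (t:ℝ) := by exact_mod_cast ht
  have ht0 : (0:ℝ) < t := by linarith
  set L := Real.log (4 * t / (l * δ)) with hL
  have hLpos : 0 < L := by
    apply Real.log_pos
    rw [lt_div_iff₀ (by positivity)]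
    nlinarith
  have hbpos : 0 < b := by rw [hb]; positivity
  set r := 1 - l / (2 * t) with hr
  have hrhalf : (1:ℝ)/2 ≤ r := by
    have : l / (2*(t:ℝ)) ≤ 1/2 := by
      rw [div_le_div_iff₀ (by positivity) (by norm_num)]
      nlinarith
    simp only [hr]; linarith
  have hr0 : (0:ℝ) < r := lt_of_lt_of_le one_half_pos hrhalf
  have hr1 : r < 1 := by
    have : 0 < l / (2*(t:ℝ)) := by positivity
    simp only [hr]; linarith
  set q := 1 - l / 2 with hq
  have hqhalf : (1:ℝ)/2 ≤ q := by simp only [hq]; linarith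
  have hq0 : (0:ℝ) < q := lt_of_lt_of_le one_half_pos hqhalf
  have hq1 : q < 1 := by simp only [hq]; linarith
  set N := ⌈b⁻¹⌉₊ with hN
  have hbiN : b⁻¹ ≤ (N:ℝ) := Nat.le_ceil _
  have hN1 : 1 ≤ N := Nat.one_le_ceil_iff.mpr (by positivity)
  -- Bernoulli: q ≤ r ^ t
  have hqrt : q ≤ r ^ t := by
    have h2 : (-2:ℝ) ≤ -(l/(2*t)) := by
      have : l / (2*(t:ℝ)) ≤ 1/2 := by
        rw [div_le_div_iff₀ (by positivity) (by norm_num)]; nlinarith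
      linarith
    have h := one_add_mul_le_pow h2 t
    have e1 : (1:ℝ) + (t:ℝ) * -(l/(2*t)) = q := by
      field_simp [hq]; ring
    have e2 : (1:ℝ) + -(l/(2*t)) = r := by simp only [hr]; ring
    rw [e1, e2] at h
    exact h
  -- pointwise bound
  have key : ∀ i : ℕ, N ≤ i → (p i).toReal ≤ 2 * r ^ i := by
    intro i hi
    refine (hp i).trans ?_
    have hi1 : 1 ≤ i := le_trans hN1 hi
    set m := ⌈(i:ℝ)/t⌉ with hm
    have hmge : (i:ℝ)/t ≤ (m:ℝ) := Int.le_ceil _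
    have e1 : q ^ (m - 1) = q ^ (((m:ℝ) - 1)) := by
      rw [← Real.rpow_intCast q (m-1)]; push_cast; ring_nf
    have s1 : q ^ (((m:ℝ) - 1)) ≤ q ^ ((i:ℝ)/t - 1) :=
      Real.rpow_le_rpow_of_exponent_ge hq0 hq1.le (by linarith)
    have s2 : q ^ ((i:ℝ)/t - 1) = q ^ ((i:ℝ)/t) / q := by
      rw [Real.rpow_sub hq0, Real.rpow_one]
    have s3 : q ^ ((i:ℝ)/t) ≤ (r ^ t) ^ ((i:ℝ)/t) :=
      Real.rpow_le_rpow hq0.le hqrt (by positivity)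
    have s4 : ((r:ℝ) ^ t) ^ ((i:ℝ)/t) = r ^ i := by
      rw [← Real.rpow_natCast r t, ← Real.rpow_mul hr0.le, ← Real.rpow_natCast r i]
      congr 1
      field_simp
    have hqpos : 0 < q ^ ((i:ℝ)/t) := Real.rpow_pos_of_pos hq0 _
    have s5 : q ^ ((i:ℝ)/t) / q ≤ 2 * (q ^ ((i:ℝ)/t)) := by
      rw [div_le_iff₀ hq0]
      nlinarith
    calc q ^ (m - 1) = q ^ (((m:ℝ) - 1)) := e1
      _ ≤ q ^ ((i:ℝ)/t - 1) := s1
      _ = q ^ ((i:ℝ)/t) / q := s2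
      _ ≤ 2 * (q ^ ((i:ℝ)/t)) := s5
      _ ≤ 2 * ((r ^ t) ^ ((i:ℝ)/t)) := by nlinarith [s3]
      _ = 2 * r ^ i := by rw [s4]
  -- the set
  set S : Set ℕ := {i : ℕ | b⁻¹ ≤ (i:ℝ)} with hS
  have hmem : ∀ i : ℕ, i ∈ S ↔ N ≤ i := by
    intro i
    simp only [hS, Set.mem_setOf_eq, hN, Nat.ceil_le, Nat.cast_le]
  -- measure as tsum of reals
  have hmeas : (p.toMeasure S).toReal = ∑' i, S.indicator (fun i => (p i).toReal) i := by
    rw [PMF.toMeasure_apply (p := p) (s := S) trivial, ENNReal.tsum_toReal_eq]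
    · congr 1; funext i
      by_cases h : i ∈ S <;> simp [Set.indicator, h]
    · intro a
      by_cases h : a ∈ S <;> simp [Set.indicator, h, PMF.apply_ne_top]
  have hsump : Summable (fun i : ℕ => (p i).toReal) :=
    ENNReal.summable_toReal (by rw [p.tsum_coe]; exact ENNReal.one_ne_top)
  set g : ℕ → ℝ := S.indicator (fun i => 2 * r ^ i) with hg
  have hsumg : Summable g :=
    (((summable_geometric_of_lt_one hr0.le hr1).mul_left 2)).indicator S
  have hle : ∀ i, S.indicator (fun i => (p i).toReal) i ≤ g i := by
    intro i
    by_cases h : i ∈ S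
    · simp only [hg, Set.indicator_of_mem h]
      exact key i ((hmem i).mp h)
    · simp [hg, Set.indicator_of_notMem h]
  have hinj : Function.Injective (fun n : ℕ => N + n) := fun a c h => by
    simpa using h
  have hsupp : Function.support g ⊆ Set.range (fun n : ℕ => N + n) := by
    intro i hi
    have hiS : i ∈ S := by
      by_contra h
      exact hi (by simp [hg, Set.indicator_of_notMem h])
    have : N ≤ i := (hmem i).mp hiS
    exact ⟨i - N, Nat.add_sub_cancel' this⟩
  have htg : ∑' i, g i = (4 * t / l) * r ^ N := by
    rw [← hinj.tsum_eq hsupp]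
    have e : ∀ n : ℕ, g (N + n) = 2 * r ^ N * r ^ n := by
      intro n
      have : (N + n : ℕ) ∈ S := (hmem _).mpr (Nat.le_add_right _ _)
      simp only [hg, Set.indicator_of_mem this, pow_add]
      ring
    simp only [e]
    rw [tsum_mul_left, tsum_geometric_of_lt_one hr0.le hr1]
    have h1r : 1 - r = l / (2*t) := by simp only [hr]; ring
    rw [h1r]
    field_simp
    ring
  have part1 : (p.toMeasure S).toReal ≤ (4 * t / l) * r ^ N := by
    rw [hmeas, ← htg]
    exact (hsump.indicator S).tsum_le_tsum hle hsumg
  have part2 : (4 * t / l) * r ^ N ≤ δ := by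
    have hbinv : b⁻¹ = 2 * t * L / l := by
      rw [hb, inv_div]
    have hrexp : r ≤ Real.exp (-(l/(2*t))) := by
      have := Real.add_one_le_exp (-(l/(2*(t:ℝ))))
      simp only [hr]; linarith
    have s1 : (r:ℝ) ^ N = r ^ ((N:ℝ)) := (Real.rpow_natCast r N).symm
    have s2 : r ^ ((N:ℝ)) ≤ r ^ (b⁻¹) :=
      Real.rpow_le_rpow_of_exponent_ge hr0 hr1.le hbiN
    have s3 : r ^ (b⁻¹) ≤ (Real.exp (-(l/(2*t)))) ^ (b⁻¹) :=
      Real.rpow_le_rpow hr0.le hrexp (by positivity)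
    have s4 : (Real.exp (-(l/(2*t)))) ^ (b⁻¹) = Real.exp (-(l/(2*t)) * b⁻¹) := by
      rw [← Real.exp_mul]
    have s5 : -(l/(2*(t:ℝ))) * b⁻¹ = -L := by
      rw [hbinv]
      field_simp
    have s6 : Real.exp (-L) = l * δ / (4*t) := by
      rw [hL, ← Real.log_inv, Real.exp_log (by positivity)]
      rw [inv_div]
    have hrN : (r:ℝ) ^ N ≤ l * δ / (4*t) := by
      rw [s1]
      calc r ^ ((N:ℝ)) ≤ r ^ (b⁻¹) := s2
        _ ≤ (Real.exp (-(l/(2*t)))) ^ (b⁻¹) := s3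
        _ = Real.exp (-(l/(2*t)) * b⁻¹) := s4
        _ = Real.exp (-L) := by rw [s5]
        _ = l * δ / (4*t) := s6
    calc (4 * t / l) * r ^ N ≤ (4 * t / l) * (l * δ / (4*t)) := by
          apply mul_le_mul_of_nonneg_left hrN (by positivity)
      _ = δ := by field_simp
  exact ⟨part1, part2⟩
end

section
/- Fix integers t₀ ≤ t₁ and define the sequence L_t recursively by L_{t₁} = e^{-1}(t₁ - t₀ + 1)^{-1} and L_t = L_{t+1} + L_{t+1}² for t₀ ≤ t < t₁. Then L_t ≤ (t₁ - t₀ + 1)^{-1} for all t ∈ [t₀, t₁]. -/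
/-!
Read backwards from `t₁`, each step multiplies `L` by `1 + L`. As long as `L ≤ 1/n` with
`n = t₁ - t₀ + 1`, the factor is at most `1 + 1/n`, and at most `n - 1` steps are taken, so the
total growth is at most `(1 + 1/n)^n ≤ e`, which cancels the initial factor `e⁻¹`.
-/

open Real

section AddSqRecursion

variable {u : ℕ → ℝ} {δ : ℝ} {m : ℕ}

theorem le_mul_one_add_pow_of_eq_add_sq (h0 : 0 ≤ u 0)
    (hstep : ∀ k < m, u (k + 1) = u k + u k ^ 2) (hsmall : ∀ k < m, u 0 * (1 + δ) ^ k ≤ δ) :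
    ∀ k ≤ m, 0 ≤ u k ∧ u k ≤ u 0 * (1 + δ) ^ k := by
  intro k
  induction k with
  | zero => simpa using h0
  | succ k ih =>
    intro hk
    obtain ⟨hnonneg, hle⟩ := ih (by omega)
    have hle_δ : u k ≤ δ := hle.trans (hsmall k hk)
    rw [hstep k hk]
    refine ⟨by positivity, ?_⟩
    calc u k + u k ^ 2 = u k * (1 + u k) := by ring
      _ ≤ u 0 * (1 + δ) ^ k * (1 + δ) :=
        mul_le_mul hle (by linarith) (by linarith) (hnonneg.trans hle)
      _ = u 0 * (1 + δ) ^ (k + 1) := by ring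

theorem le_of_eq_add_sq (h0 : 0 ≤ u 0) (hδ : 0 ≤ δ)
    (hstep : ∀ k < m, u (k + 1) = u k + u k ^ 2) (hsmall : u 0 * (1 + δ) ^ m ≤ δ) :
    ∀ k ≤ m, u k ≤ δ := by
  have hsmall' : ∀ k ≤ m, u 0 * (1 + δ) ^ k ≤ δ := fun k hk ↦
    (mul_le_mul_of_nonneg_left (pow_le_pow_right₀ (by linarith) hk) h0).trans hsmall
  exact fun k hk ↦
    ((le_mul_one_add_pow_of_eq_add_sq h0 hstep fun j hj ↦ hsmall' j hj.le) k hk).2.trans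
      (hsmall' k hk)

end AddSqRecursion

theorem exp_inv_mul_inv_mul_one_add_inv_pow_le (m : ℕ) :
    (exp 1)⁻¹ * ((m + 1 : ℕ) : ℝ)⁻¹ * (1 + ((m + 1 : ℕ) : ℝ)⁻¹) ^ m ≤
      ((m + 1 : ℕ) : ℝ)⁻¹ := by
  have hpow : (1 + ((m + 1 : ℕ) : ℝ)⁻¹) ^ m ≤ exp 1 :=
    (pow_le_pow_right₀ (le_add_of_nonneg_right (by positivity)) m.le_succ).trans
      one_add_inv_pow_le_exp
  calc (exp 1)⁻¹ * ((m + 1 : ℕ) : ℝ)⁻¹ * (1 + ((m + 1 : ℕ) : ℝ)⁻¹) ^ m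
      ≤ (exp 1)⁻¹ * ((m + 1 : ℕ) : ℝ)⁻¹ * exp 1 := by gcongr
    _ = ((m + 1 : ℕ) : ℝ)⁻¹ := by field_simp

theorem backwards_recursion_bound_general
    (t₀ t₁ : ℤ) (L : ℤ → ℝ)
    (hend : L t₁ = (Real.exp 1)⁻¹ * ((t₁ - t₀ + 1 : ℤ) : ℝ)⁻¹)
    (hrec : ∀ t : ℤ, t₀ ≤ t → t < t₁ → L t = L (t + 1) + L (t + 1) ^ 2) :
    ∀ t : ℤ, t₀ ≤ t → t ≤ t₁ → L t ≤ ((t₁ - t₀ + 1 : ℤ) : ℝ)⁻¹ := by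
  intro t ht₀ ht₁
  obtain ⟨m, hm⟩ : ∃ m : ℕ, t₁ - t₀ = m := ⟨(t₁ - t₀).toNat, by omega⟩
  obtain ⟨k, hk⟩ : ∃ k : ℕ, t₁ - t = k := ⟨(t₁ - t).toNat, by omega⟩
  have hn : ((t₁ - t₀ + 1 : ℤ) : ℝ) = ((m + 1 : ℕ) : ℝ) := by rw [hm]; push_cast; ring
  set δ : ℝ := ((m + 1 : ℕ) : ℝ)⁻¹
  set u : ℕ → ℝ := fun j ↦ L (t₁ - j)
  have hu0 : u 0 = (exp 1)⁻¹ * δ := by simp [u, hend, hn, δ]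
  have hstep : ∀ j < m, u (j + 1) = u j + u j ^ 2 := fun j hj ↦ by
    have hshift : t₁ - (j + 1) + 1 = t₁ - j := by ring
    simpa [u, hshift] using hrec (t₁ - (j + 1)) (by omega) (by omega)
  have hsmall : u 0 * (1 + δ) ^ m ≤ δ := hu0 ▸ exp_inv_mul_inv_mul_one_add_inv_pow_le m
  calc L t = u k := by simp [u, ← hk]
    _ ≤ δ := le_of_eq_add_sq (hu0 ▸ by positivity) (by positivity) hstep hsmall k (by omega)
    _ = ((t₁ - t₀ + 1 : ℤ) : ℝ)⁻¹ := by rw [hn]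

/-- The backwards recursion L_{t₁} = e⁻¹(t₁-t₀+1)⁻¹, L_t = L_{t+1} + L_{t+1}²
satisfies L_t ≤ (t₁-t₀+1)⁻¹ on [t₀,t₁]. -/
theorem backwards_recursion_bound
    (t₀ t₁ : ℤ) (h : t₀ ≤ t₁) (L : ℤ → ℝ)
    (hend : L t₁ = (Real.exp 1)⁻¹ * ((t₁ - t₀ + 1 : ℤ) : ℝ)⁻¹)
    (hrec : ∀ t : ℤ, t₀ ≤ t → t < t₁ → L t = L (t + 1) + L (t + 1) ^ 2) :
    ∀ t : ℤ, t₀ ≤ t → t ≤ t₁ → L t ≤ ((t₁ - t₀ + 1 : ℤ) : ℝ)⁻¹ :=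
  backwards_recursion_bound_general t₀ t₁ L hend hrec
end
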